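/- Let (L, [·,·], α) be a multiplicative Hom-Lie superalgebra. If D_θ is an α^k-derivation of degree θ and D_μ belongs to the α^s-centroid of degree μ, then the supercommutator [D_θ, D_μ] = D_θ D_μ - (-1)^{θμ} D_μ D_θ belongs to the α^{k+s}-centroid. In other words, [Der(L), C(L)] ⊆ C(L). -/
import Mathlib


open LinearMap

def ssign (K : Type*) [Field K] (a b : ZMod 2) : K := (-1 : K) ^ (a.val * b.val)

structure HomLieSuper (K L : Type*) [Field K] [AddCommGroup L] [Module K L] where
  bracket : L →ₗ[K] L →ₗ[K] L
  a : L →ₗ[K] L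
  grading : ZMod 2 → Submodule K L
  bracket_mem : ∀ i j : ZMod 2, ∀ x ∈ grading i, ∀ y ∈ grading j,
    bracket x y ∈ grading (i + j)
  a_mem : ∀ i : ZMod 2, ∀ x ∈ grading i, a x ∈ grading i
  skew : ∀ i j : ZMod 2, ∀ x ∈ grading i, ∀ y ∈ grading j,
    bracket x y = - (ssign K i j) • bracket y x
  jacobi : ∀ i j k : ZMod 2, ∀ x ∈ grading i, ∀ y ∈ grading j, ∀ z ∈ grading k,
    ssign K k i • bracket (a x) (bracket y z) +
    ssign K i j • bracket (a y) (bracket z x) +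
    ssign K j k • bracket (a z) (bracket x y) = 0

variable {K L : Type*} [Field K] [AddCommGroup L] [Module K L]

namespace HomLieSuper

/-- α preserves the bracket. -/
def Multiplicative (H : HomLieSuper K L) : Prop :=
  ∀ x y : L, H.a (H.bracket x y) = H.bracket (H.a x) (H.a y)

/-- `D` is homogeneous of degree `θ`. -/
def IsHomog (H : HomLieSuper K L) (θ : ZMod 2) (D : L →ₗ[K] L) : Prop :=
  ∀ i : ZMod 2, ∀ x ∈ H.grading i, D x ∈ H.grading (i + θ)

/-- `D` is a generalized `α^k`-derivation of degree `θ` with associated maps `D'`, `D''`. -/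
def GenDer (H : HomLieSuper K L) (θ : ZMod 2) (k : ℕ) (D D' D'' : L →ₗ[K] L) : Prop :=
  H.IsHomog θ D ∧ H.IsHomog θ D' ∧ H.IsHomog θ D'' ∧
  D * H.a = H.a * D ∧ D' * H.a = H.a * D' ∧ D'' * H.a = H.a * D'' ∧
  ∀ i : ZMod 2, ∀ x ∈ H.grading i, ∀ y : L,
    H.bracket (D x) ((H.a ^ k) y) + ssign K θ i • H.bracket ((H.a ^ k) x) (D' y)
      = D'' (H.bracket x y)

/-- `D` is an `α^k`-quasiderivation of degree `θ` with witness `D'`. -/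
def QDer (H : HomLieSuper K L) (θ : ZMod 2) (k : ℕ) (D D' : L →ₗ[K] L) : Prop :=
  H.GenDer θ k D D D'

/-- `D` is an `α^k`-derivation of degree `θ`. -/
def Der (H : HomLieSuper K L) (θ : ZMod 2) (k : ℕ) (D : L →ₗ[K] L) : Prop :=
  H.QDer θ k D D

/-- `D` belongs to the `α^k`-centroid, with degree `θ`. -/
def Cent (H : HomLieSuper K L) (θ : ZMod 2) (k : ℕ) (D : L →ₗ[K] L) : Prop :=
  H.IsHomog θ D ∧ D * H.a = H.a * D ∧
  ∀ i : ZMod 2, ∀ x ∈ H.grading i, ∀ y : L,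
    H.bracket (D x) ((H.a ^ k) y) = ssign K θ i • H.bracket ((H.a ^ k) x) (D y) ∧
    H.bracket (D x) ((H.a ^ k) y) = D (H.bracket x y)

/-- `D` belongs to the `α^k`-quasicentroid, with degree `θ`. -/
def QC (H : HomLieSuper K L) (θ : ZMod 2) (k : ℕ) (D : L →ₗ[K] L) : Prop :=
  H.IsHomog θ D ∧ D * H.a = H.a * D ∧
  ∀ i : ZMod 2, ∀ x ∈ H.grading i, ∀ y : L,
    H.bracket (D x) ((H.a ^ k) y) = ssign K θ i • H.bracket ((H.a ^ k) x) (D y)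

/-- `D` is a central `α^k`-derivation of degree `θ`. -/
def ZDer (H : HomLieSuper K L) (θ : ZMod 2) (k : ℕ) (D : L →ₗ[K] L) : Prop :=
  H.IsHomog θ D ∧ D * H.a = H.a * D ∧
  ∀ i : ZMod 2, ∀ x ∈ H.grading i, ∀ y : L,
    H.bracket (D x) ((H.a ^ k) y) = 0 ∧ D (H.bracket x y) = 0

/-- Supercommutator of homogeneous endomorphisms of degrees `θ`, `μ`. -/
def scomm (K : Type*) [Field K] {L : Type*} [AddCommGroup L] [Module K L]
    (θ μ : ZMod 2) (D E : L →ₗ[K] L) : L →ₗ[K] L :=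
  D * E - ssign K θ μ • (E * D)

end HomLieSuper

section Aux

lemma ssign_cases (a : ZMod 2) : a = 0 ∨ a = 1 := by revert a; decide

lemma zval0 : (0 : ZMod 2).val = 0 := rfl

lemma zval1 : (1 : ZMod 2).val = 1 := rfl

lemma zval2 : (2 : ZMod 2).val = 0 := rfl

lemma ssign_mul_self (a b : ZMod 2) : ssign K a b * ssign K a b = 1 := by
  rcases ssign_cases a with rfl | rfl <;> rcases ssign_cases b with rfl | rfl <;>
    norm_num [ssign, zval0, zval1, zval2]

lemma ssign_add_right (a b c : ZMod 2) : ssign K a (b + c) = ssign K a b * ssign K a c := by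
  rcases ssign_cases a with rfl | rfl <;> rcases ssign_cases b with rfl | rfl <;>
    rcases ssign_cases c with rfl | rfl <;> norm_num [ssign, zval0, zval1, zval2]

lemma ssign_add_left (a b c : ZMod 2) : ssign K (a + b) c = ssign K a c * ssign K b c := by
  rcases ssign_cases a with rfl | rfl <;> rcases ssign_cases b with rfl | rfl <;>
    rcases ssign_cases c with rfl | rfl <;> norm_num [ssign, zval0, zval1, zval2]

lemma ssign_smul_smul {M : Type*} [AddCommGroup M] [Module K M] (a b : ZMod 2) (m : M) :
    ssign K a b • ssign K a b • m = m := by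
  rw [smul_smul, ssign_mul_self, one_smul]

end Aux

open HomLieSuper in
theorem stmt4 (H : HomLieSuper K L) (hm : H.Multiplicative)
    (θ μ : ZMod 2) (k s : ℕ) (D E : L →ₗ[K] L)
    (hD : H.Der θ k D) (hE : H.Cent μ s E) :
    H.Cent (θ + μ) (k + s) (scomm K θ μ D E) := by
  obtain ⟨hDh, -, -, hDa, -, -, hDb⟩ := hD
  obtain ⟨hEh, hEa, hEb⟩ := hE
  have hDc : ∀ (n : ℕ) (x : L), D ((H.a ^ n) x) = (H.a ^ n) (D x) := by
    intro n x
    have h : D * H.a ^ n = H.a ^ n * D := (Commute.pow_right hDa n)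
    simpa [Module.End.mul_apply] using DFunLike.congr_fun h x
  have hEc : ∀ (n : ℕ) (x : L), E ((H.a ^ n) x) = (H.a ^ n) (E x) := by
    intro n x
    have h : E * H.a ^ n = H.a ^ n * E := (Commute.pow_right hEa n)
    simpa [Module.End.mul_apply] using DFunLike.congr_fun h x
  have hpow : ∀ (n : ℕ) (i : ZMod 2), ∀ x ∈ H.grading i, (H.a ^ n) x ∈ H.grading i := by
    intro n
    induction n with
    | zero => intro i x hx; simpa using hx
    | succ n ih =>
      intro i x hx
      rw [pow_succ, Module.End.mul_apply]
      exact ih i _ (H.a_mem i x hx)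
  have hab : ∀ (m n : ℕ) (y : L), (H.a ^ (m + n)) y = (H.a ^ m) ((H.a ^ n) y) := by
    intro m n y; rw [pow_add]; rfl
  have cent2 : ∀ (j : ZMod 2), ∀ x ∈ H.grading j, ∀ y : L,
      H.bracket (E x) ((H.a ^ s) y) = E (H.bracket x y) := fun j x hx y => (hEb j x hx y).2
  have cent1' : ∀ (j : ZMod 2), ∀ x ∈ H.grading j, ∀ y : L,
      H.bracket ((H.a ^ s) x) (E y) = ssign K μ j • E (H.bracket x y) := by
    intro j x hx y
    calc H.bracket ((H.a ^ s) x) (E y)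
        = ssign K μ j • ssign K μ j • H.bracket ((H.a ^ s) x) (E y) :=
          (ssign_smul_smul μ j _).symm
      _ = ssign K μ j • H.bracket (E x) ((H.a ^ s) y) := by rw [← (hEb j x hx y).1]
      _ = ssign K μ j • E (H.bracket x y) := by rw [(hEb j x hx y).2]
  refine ⟨?_, ?_, ?_⟩
  · -- homogeneity
    intro i x hx
    have h1 : D (E x) ∈ H.grading (i + (θ + μ)) := by
      have := hDh (i + μ) (E x) (hEh i x hx)
      rwa [show i + μ + θ = i + (θ + μ) by ring] at this
    have h2 : E (D x) ∈ H.grading (i + (θ + μ)) := by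
      have := hEh (i + θ) (D x) (hDh i x hx)
      rwa [show i + θ + μ = i + (θ + μ) by ring] at this
    simpa [scomm, LinearMap.sub_apply, Module.End.mul_apply, LinearMap.smul_apply] using
      Submodule.sub_mem _ h1 (Submodule.smul_mem _ _ h2)
  · -- commutes with α
    have h1 : D * E * H.a = H.a * (D * E) := by
      rw [mul_assoc, hEa, ← mul_assoc, hDa, mul_assoc]
    have h2 : E * D * H.a = H.a * (E * D) := by
      rw [mul_assoc, hDa, ← mul_assoc, hEa, mul_assoc]
    show (D * E - ssign K θ μ • (E * D)) * H.a = H.a * (D * E - ssign K θ μ • (E * D))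
    rw [sub_mul, mul_sub, h1, smul_mul_assoc, h2, mul_smul_comm]
  · intro i x hx y
    -- key identities
    have key1 : H.bracket (D (E x)) ((H.a ^ (k + s)) y)
        = D (E (H.bracket x y))
          - (ssign K θ i * ssign K θ μ) • H.bracket (E ((H.a ^ k) x)) ((H.a ^ s) (D y)) := by
      have h := hDb (i + μ) (E x) (hEh i x hx) ((H.a ^ s) y)
      rw [cent2 i x hx y, hDc s y, ← hEc k x] at h
      rw [hab k s y, eq_sub_iff_add_eq, ← ssign_add_right]
      exact h
    have key2 : H.bracket (E (D x)) ((H.a ^ (k + s)) y)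
        = E (H.bracket (D x) ((H.a ^ k) y)) := by
      rw [show k + s = s + k by ring, hab s k y]
      exact cent2 (i + θ) (D x) (hDh i x hx) ((H.a ^ k) y)
    have key2' : H.bracket (E (D x)) ((H.a ^ (k + s)) y)
        = (ssign K μ i * ssign K μ θ) • H.bracket ((H.a ^ s) (D x)) ((H.a ^ k) (E y)) := by
      have h := (hEb (i + θ) (D x) (hDh i x hx) ((H.a ^ k) y)).1
      rw [hEc k y] at h
      rw [show k + s = s + k by ring, hab s k y, h, ssign_add_right]
    have key3 : D (H.bracket x y)
        = H.bracket (D x) ((H.a ^ k) y) + ssign K θ i • H.bracket ((H.a ^ k) x) (D y) :=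
      (hDb i x hx y).symm
    have key4 : H.bracket ((H.a ^ (k + s)) x) (D (E y))
        = (ssign K θ i * ssign K μ i) • D (E (H.bracket x y))
          - ssign K θ i • H.bracket ((H.a ^ s) (D x)) ((H.a ^ k) (E y)) := by
      have h := hDb i ((H.a ^ s) x) (hpow s i x hx) (E y)
      rw [hDc s x, ← hab k s x, cent1' i x hx y, map_smul] at h
      calc H.bracket ((H.a ^ (k + s)) x) (D (E y))
          = ssign K θ i • ssign K θ i • H.bracket ((H.a ^ (k + s)) x) (D (E y)) :=
            (ssign_smul_smul θ i _).symm
        _ = ssign K θ i • (ssign K μ i • D (E (H.bracket x y))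
              - H.bracket ((H.a ^ s) (D x)) ((H.a ^ k) (E y))) := by
            rw [← h]; congr 1; abel
        _ = _ := by rw [smul_sub, smul_smul]
    have key5 : H.bracket ((H.a ^ (k + s)) x) (E (D y))
        = ssign K μ i • H.bracket (E ((H.a ^ k) x)) ((H.a ^ s) (D y)) := by
      have h := (hEb i ((H.a ^ k) x) (hpow k i x hx) (D y)).1
      rw [← hab s k x, show s + k = k + s by ring] at h
      rw [h, ssign_smul_smul]
    have cc : H.bracket (E ((H.a ^ k) x)) ((H.a ^ s) (D y))
        = E (H.bracket ((H.a ^ k) x) (D y)) := cent2 i _ (hpow k i x hx) (D y)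
    constructor
    · -- eq1
      simp only [scomm, LinearMap.sub_apply, Module.End.mul_apply, LinearMap.smul_apply,
        map_sub, map_smul, LinearMap.sub_apply, LinearMap.smul_apply]
      rw [key1, key2', key4, key5]
      rw [ssign_add_left]
      rcases ssign_cases θ with rfl | rfl <;> rcases ssign_cases μ with rfl | rfl <;>
        rcases ssign_cases i with rfl | rfl <;>
        · norm_num [ssign, zval0, zval1, zval2]
          module
    · -- eq2
      simp only [scomm, LinearMap.sub_apply, Module.End.mul_apply, LinearMap.smul_apply,
        map_sub, map_smul, LinearMap.sub_apply, LinearMap.smul_apply]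
      rw [key1, key2, key3, cc, map_add, map_smul]
      rcases ssign_cases θ with rfl | rfl <;> rcases ssign_cases μ with rfl | rfl <;>
        rcases ssign_cases i with rfl | rfl <;>
        · norm_num [ssign, zval0, zval1, zval2]
          module
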